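/- Let p be a prime and let A be a sequence over (Z/pZ)² containing the four elements (0,0), (1,0), (0,1), (s,t) each with multiplicity at least ⌊δp⌋, where δ > 0 is fixed. Suppose for a parameter N with 1 ≤ N ≤ δp/3 the exponential sum bound Σ_{α ≠ (0,0)} Z(α·(1,0))·Z(α·(0,1))·Z(α·(s,t)) ≤ (N+1)³/2 holds, where Z(u) = min(N+1, 2/|1 - e^{2πiu/p}|) for u ∈ Z/pZ, u ≠ 0, and Z(0) = N+1. Then every element of (Z/pZ)² can be written as Σ_{1≤i<j≤4} ν_{ij}(x_i - x_j) with integers 0 ≤ ν_{ij} ≤ N, where x₁ = (0,0), x₂ = (1,0), x₃ = (0,1), x₄ = (s,t). -/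

import Mathlib

noncomputable section

/-- The quantity Z(u) = min(N+1, 2/|1 - e^{2πiu/p}|), with Z(0) = N+1. -/
def Zf (p N : ℕ) (u : ZMod p) : ℝ :=
  if u = 0 then (N : ℝ) + 1
  else min ((N : ℝ) + 1)
    (2 / ‖1 - Complex.exp (2 * Real.pi * Complex.I * (u.val : ℂ) / (p : ℂ))‖)

/-!
Count the representations `z = ∑ ν_{ij} (x_i - x_j)` with orthogonality of the characters
`v ↦ e(α · v / p)` of `(ℤ/pℤ)²`: `p²` times their number is
`∑_α e(-α · z / p) ∏ G(α · (x_i - x_j))`, where `G(u) = ∑_{ν ≤ N} e(ν u / p)` is a geometric sum,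
so `|G(u)| ≤ Z(u)`. The term `α = 0` is `(N+1)⁶`. In every other term the three differences
`x₁ - x_j = -x_j` contribute at most `Z(α · x_j)` and the other three at most `N + 1`, so by
hypothesis these terms add up to at most `(N+1)⁶ / 2`.
-/

open Finset

lemma AddChar.map_sum_eq_prod {A M ι : Type*} [AddCommMonoid A] [CommMonoid M] (ψ : AddChar A M)
    (s : Finset ι) (f : ι → A) : ψ (∑ i ∈ s, f i) = ∏ i ∈ s, ψ (f i) := by
  induction s using Finset.cons_induction with
  | empty => simp
  | cons a s ha ih => rw [sum_cons, prod_cons, AddChar.map_add_eq_mul, ih]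

section Pairing

variable {p : ℕ}

def pairing (α : ZMod p × ZMod p) : ZMod p × ZMod p →+ ZMod p :=
  (AddMonoidHom.mulLeft α.1).comp (AddMonoidHom.fst _ _) +
    (AddMonoidHom.mulLeft α.2).comp (AddMonoidHom.snd _ _)

@[simp]
lemma pairing_apply (α v : ZMod p × ZMod p) : pairing α v = α.1 * v.1 + α.2 * v.2 := rfl

variable [NeZero p]

lemma sum_stdAddChar_pairing (v : ZMod p × ZMod p) :
    ∑ α : ZMod p × ZMod p, ZMod.stdAddChar (pairing α v) = if v = 0 then (p : ℂ) ^ 2 else 0 := by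
  have orth (x : ZMod p) :
      ∑ a : ZMod p, ZMod.stdAddChar (a * x) = if x = 0 then (p : ℂ) else 0 := by
    simpa [ZMod.card] using AddChar.sum_mulShift x (ZMod.isPrimitive_stdAddChar p)
  simp only [pairing_apply, AddChar.map_add_eq_mul, Fintype.sum_prod_type, ← Finset.mul_sum,
    ← Finset.sum_mul, orth]
  rcases eq_or_ne v.1 0 with h1 | h1 <;> rcases eq_or_ne v.2 0 with h2 | h2 <;>
    simp [h1, h2, Prod.ext_iff, sq]

end Pairing

section GeomExpSum

variable {p : ℕ} [NeZero p]

def geomExpSum (N : ℕ) (u : ZMod p) : ℂ :=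
  ∑ j ∈ range (N + 1), ZMod.stdAddChar u ^ j

lemma geomExpSum_zero (N : ℕ) : geomExpSum N (0 : ZMod p) = N + 1 := by
  simp [geomExpSum]

lemma norm_geomExpSum_le (N : ℕ) (u : ZMod p) : ‖geomExpSum N u‖ ≤ N + 1 :=
  (norm_sum_le _ _).trans <| by simp [AddChar.norm_apply]

lemma norm_one_sub_stdAddChar (u : ZMod p) :
    ‖1 - ZMod.stdAddChar u‖ =
      ‖1 - Complex.exp (2 * Real.pi * Complex.I * (u.val : ℂ) / (p : ℂ))‖ := by
  rw [ZMod.stdAddChar_apply, ZMod.toCircle_apply]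

lemma norm_geomExpSum_le_Zf (N : ℕ) (u : ZMod p) : ‖geomExpSum N u‖ ≤ Zf p N u := by
  rw [Zf, ← norm_one_sub_stdAddChar]
  split_ifs with hu
  · exact norm_geomExpSum_le N u
  refine le_min (norm_geomExpSum_le N u) ?_
  have hne : ZMod.stdAddChar u ≠ 1 := fun h ↦
    hu (ZMod.injective_stdAddChar (h.trans (AddChar.map_zero_eq_one _).symm))
  rw [geomExpSum, geom_sum_eq hne, norm_div, norm_sub_rev (ZMod.stdAddChar u) 1]
  gcongr
  calc ‖ZMod.stdAddChar u ^ (N + 1) - 1‖ ≤ ‖ZMod.stdAddChar u ^ (N + 1)‖ + ‖(1 : ℂ)‖ :=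
        norm_sub_le _ _
    _ = 2 := by norm_num [AddChar.norm_apply]

lemma prod_norm_geomExpSum_le {ι : Type*} [Fintype ι] [DecidableEq ι] (N : ℕ) (u : ι → ZMod p)
    (S : Finset ι) :
    ∏ k, ‖geomExpSum N (u k)‖ ≤ ((N : ℝ) + 1) ^ (Fintype.card ι - #S) * ∏ k ∈ S, Zf p N (u k) := by
  rw [← prod_mul_prod_compl S, mul_comm, ← card_compl, ← prod_const]
  gcongr with k _ k _
  · exact norm_geomExpSum_le N (u k)
  · exact norm_geomExpSum_le_Zf N (u k)

lemma Zf_neg (N : ℕ) (u : ZMod p) : Zf p N (-u) = Zf p N u := by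
  have h : ‖1 - (starRingEnd ℂ) (ZMod.stdAddChar u)‖ = ‖1 - ZMod.stdAddChar u‖ := by
    rw [← Complex.norm_conj, map_sub, map_one, Complex.conj_conj]
  simp only [Zf, neg_eq_zero, ← norm_one_sub_stdAddChar, AddChar.map_neg_eq_conj, h]

end GeomExpSum

section Counting

variable {p : ℕ} [NeZero p] {ι : Type*} [Fintype ι] [DecidableEq ι]

lemma card_sum_nsmul_eq_mul_sq (N : ℕ) (d : ι → ZMod p × ZMod p) (z : ZMod p × ZMod p) :
    (#{ν : ι → Fin (N + 1) | ∑ k, (ν k : ℕ) • d k = z} : ℂ) * (p : ℂ) ^ 2 =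
      ∑ α : ZMod p × ZMod p,
        (∏ k, geomExpSum N (pairing α (d k))) * ZMod.stdAddChar (-pairing α z) := by
  have hν (α : ZMod p × ZMod p) (ν : ι → Fin (N + 1)) :
      ZMod.stdAddChar (pairing α (∑ k, (ν k : ℕ) • d k - z)) =
        (∏ k, ZMod.stdAddChar (pairing α (d k)) ^ (ν k : ℕ)) * ZMod.stdAddChar (-pairing α z) := by
    rw [map_sub, map_sum, sub_eq_add_neg, AddChar.map_add_eq_mul, AddChar.map_sum_eq_prod]
    simp only [map_nsmul, AddChar.map_nsmul_eq_pow]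
  calc (#{ν : ι → Fin (N + 1) | ∑ k, (ν k : ℕ) • d k = z} : ℂ) * (p : ℂ) ^ 2
      = ∑ ν : ι → Fin (N + 1), ∑ α : ZMod p × ZMod p,
          ZMod.stdAddChar (pairing α (∑ k, (ν k : ℕ) • d k - z)) := by
        simp only [sum_stdAddChar_pairing, sub_eq_zero, sum_ite, sum_const_zero, add_zero,
          sum_const, nsmul_eq_mul]
    _ = ∑ α : ZMod p × ZMod p,
          (∏ k, geomExpSum N (pairing α (d k))) * ZMod.stdAddChar (-pairing α z) := by
        rw [sum_comm]
        simp only [hν, ← sum_mul, geomExpSum, ← Fin.sum_univ_eq_sum_range, Fintype.prod_sum]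

lemma exists_sum_nsmul_eq_of_sum_prod_norm_lt (N : ℕ) (d : ι → ZMod p × ZMod p)
    (z : ZMod p × ZMod p)
    (h : ∑ α ∈ univ \ {0}, ∏ k, ‖geomExpSum N (pairing α (d k))‖ <
      ((N : ℝ) + 1) ^ Fintype.card ι) :
    ∃ ν : ι → Fin (N + 1), ∑ k, (ν k : ℕ) • d k = z := by
  by_contra hz
  have hcard : #{ν : ι → Fin (N + 1) | ∑ k, (ν k : ℕ) • d k = z} = 0 := by
    simpa [filter_eq_empty_iff] using hz
  set f : ZMod p × ZMod p → ℂ :=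
    fun α ↦ (∏ k, geomExpSum N (pairing α (d k))) * ZMod.stdAddChar (-pairing α z)
  have hcount : 0 = ∑ α ∈ univ \ {0}, f α + f 0 := by
    rw [← sum_eq_sum_sdiff_singleton_add (mem_univ 0), ← card_sum_nsmul_eq_mul_sq, hcard,
      Nat.cast_zero, zero_mul]
  have hmain : ((N : ℝ) + 1) ^ Fintype.card ι = ‖∑ α ∈ univ \ {0}, f α‖ := by
    have hf0 : f 0 = ((N : ℂ) + 1) ^ Fintype.card ι := by simp [f, geomExpSum_zero]
    rw [eq_neg_of_add_eq_zero_left hcount.symm, norm_neg, hf0]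
    norm_cast
  have herror :
      ‖∑ α ∈ univ \ {0}, f α‖ ≤ ∑ α ∈ univ \ {0}, ∏ k, ‖geomExpSum N (pairing α (d k))‖ :=
    (norm_sum_le _ _).trans_eq <| by simp [f, norm_prod, AddChar.norm_apply]
  linarith

end Counting

theorem stmt15_general (p : ℕ) [hp : Fact (Nat.Prime p)] (s t : ZMod p) (N : ℕ)
    (hexp : (∑ α ∈ (Finset.univ : Finset (ZMod p × ZMod p)) \ {(0, 0)},
        Zf p N α.1 * Zf p N α.2 * Zf p N (α.1 * s + α.2 * t)) ≤ ((N : ℝ) + 1) ^ 3 / 2)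
    (X : Fin 4 → ZMod p × ZMod p)
    (hX : X = ![((0 : ZMod p), (0 : ZMod p)), (1, 0), (0, 1), (s, t)]) :
    ∀ z : ZMod p × ZMod p, ∃ ν : Fin 4 → Fin 4 → ℕ,
      (∀ i j : Fin 4, ν i j ≤ N) ∧
      z = ∑ i : Fin 4, ∑ j : Fin 4, if i < j then ν i j • (X i - X j) else 0 := by
  intro z
  -- All sixteen pairs `(i, j)`, with difference `0` when `i ≥ j`: this multiplies both the main
  -- term and the error terms by `(N+1)¹⁰`.
  let d : Fin 4 × Fin 4 → ZMod p × ZMod p := fun k ↦ if k.1 < k.2 then X k.1 - X k.2 else 0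
  have hterm (α : ZMod p × ZMod p) : ∏ k, ‖geomExpSum N (pairing α (d k))‖ ≤
      ((N : ℝ) + 1) ^ 13 * (Zf p N α.1 * Zf p N α.2 * Zf p N (α.1 * s + α.2 * t)) := by
    convert prod_norm_geomExpSum_le N (fun k ↦ pairing α (d k)) {(0, 1), (0, 2), (0, 3)} using 2
    · simp
    · rw [prod_insert (by decide), prod_pair (by decide), ← mul_assoc, ← Zf_neg N α.1,
        ← Zf_neg N α.2, ← Zf_neg N (α.1 * s + α.2 * t), neg_add]
      simp [d, hX]
  rw [Prod.mk_zero_zero] at hexp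
  obtain ⟨ν, hν⟩ := exists_sum_nsmul_eq_of_sum_prod_norm_lt N d z <| calc
    _ ≤ ∑ α ∈ univ \ {0},
          ((N : ℝ) + 1) ^ 13 * (Zf p N α.1 * Zf p N α.2 * Zf p N (α.1 * s + α.2 * t)) :=
        sum_le_sum fun α _ ↦ hterm α
    _ ≤ ((N : ℝ) + 1) ^ 13 * (((N : ℝ) + 1) ^ 3 / 2) := by rw [← mul_sum]; gcongr
    _ < ((N : ℝ) + 1) ^ Fintype.card (Fin 4 × Fin 4) := by
        rw [Fintype.card_prod, Fintype.card_fin]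
        nlinarith [pow_pos (show (0 : ℝ) < N + 1 by positivity) 16]
  refine ⟨fun i j ↦ ν (i, j), fun i j ↦ Fin.is_le _, ?_⟩
  rw [← hν, Fintype.sum_prod_type]
  simp [d, smul_ite]

/-- under the stated exponential sum bound, every element of (Z/pZ)²
can be written as Σ_{i<j} ν_{ij}(x_i - x_j) with 0 ≤ ν_{ij} ≤ N, where
x₁ = (0,0), x₂ = (1,0), x₃ = (0,1), x₄ = (s,t). -/
theorem stmt15 (p : ℕ) [hp : Fact (Nat.Prime p)] (δ : ℝ) (hδ : 0 < δ)
    (s t : ZMod p) (A : Multiset (ZMod p × ZMod p))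
    (hA1 : ⌊δ * p⌋₊ ≤ A.count ((0 : ZMod p), (0 : ZMod p)))
    (hA2 : ⌊δ * p⌋₊ ≤ A.count ((1 : ZMod p), (0 : ZMod p)))
    (hA3 : ⌊δ * p⌋₊ ≤ A.count ((0 : ZMod p), (1 : ZMod p)))
    (hA4 : ⌊δ * p⌋₊ ≤ A.count (s, t))
    (N : ℕ) (hN1 : 1 ≤ N) (hN2 : (N : ℝ) ≤ δ * p / 3)
    (hexp : (∑ α ∈ (Finset.univ : Finset (ZMod p × ZMod p)) \ {(0, 0)},
        Zf p N α.1 * Zf p N α.2 * Zf p N (α.1 * s + α.2 * t)) ≤ ((N : ℝ) + 1) ^ 3 / 2)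
    (X : Fin 4 → ZMod p × ZMod p)
    (hX : X = ![((0 : ZMod p), (0 : ZMod p)), (1, 0), (0, 1), (s, t)]) :
    ∀ z : ZMod p × ZMod p, ∃ ν : Fin 4 → Fin 4 → ℕ,
      (∀ i j : Fin 4, ν i j ≤ N) ∧
      z = ∑ i : Fin 4, ∑ j : Fin 4, if i < j then ν i j • (X i - X j) else 0 :=
  stmt15_general p (hp := hp) s t N hexp X hX
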